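/- Gift horse lemma: if G is a composite game and H is any game, then H ◁ G holds if and only if G is equivalent to the game obtained from G by adding H as an additional left option. -/
import Mathlib


inductive Game (A : Type) : Type 1 where
  | atom : A → Game A
  | comp : (ι κ : Type) → (ι → Game A) → (κ → Game A) → Nonempty ι → Nonempty κ → Game A

namespace Game

variable {A : Type}

/-- `G.IsAtom` holds iff `G` is an atomic game. -/
def IsAtom : Game A → Prop
  | atom _ => True
  | comp _ _ _ _ _ _ => False

/-- `G.IsLeftOption x`: `x` is a left option of `G`. -/
def IsLeftOption : Game A → Game A → Prop
  | atom _, _ => False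
  | comp _ _ L _ _ _, x => ∃ i, L i = x

/-- `G.IsRightOption y`: `y` is a right option of `G`. -/
def IsRightOption : Game A → Game A → Prop
  | atom _, _ => False
  | comp _ _ _ R _ _, x => ∃ j, R j = x

section Ord

variable [PartialOrder A]

mutual
  /-- The order relation `G ≤ H` on games over a poset. -/
  inductive Le : Game A → Game A → Prop
    | mk : ∀ {G H : Game A},
        (∀ x, G.IsLeftOption x → Tri x H) →
        (∀ y, H.IsRightOption y → Tri G y) →
        ((G.IsAtom ∨ H.IsAtom) → Tri G H) →
        Le G H
  /-- The relation `G ◁ H` on games over a poset. -/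
  inductive Tri : Game A → Game A → Prop
    | ofRight : ∀ {G H y : Game A}, G.IsRightOption y → Le y H → Tri G H
    | ofLeft : ∀ {G H x : Game A}, H.IsLeftOption x → Le G x → Tri G H
    | ofAtom : ∀ {a b : A}, a ≤ b → Tri (Game.atom a) (Game.atom b)
end

/-- Equivalence of games: `G ≤ H` and `H ≤ G`. -/
def Equiv (G H : Game A) : Prop := Le G H ∧ Le H G

/-- A game is monotone if all of its options are good, and recursively all
options are monotone. -/
inductive Monotone : Game A → Prop
  | mk : ∀ {G : Game A},
      (∀ x, G.IsLeftOption x → Le G x) →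
      (∀ y, G.IsRightOption y → Le y G) →
      (∀ x, G.IsLeftOption x → Monotone x) →
      (∀ y, G.IsRightOption y → Monotone y) →
      Monotone G

/-- A game is passable if `G ◁ G` and recursively all options are passable. -/
inductive Passable : Game A → Prop
  | mk : ∀ {G : Game A}, Tri G G →
      (∀ x, G.IsLeftOption x → Passable x) →
      (∀ y, G.IsRightOption y → Passable y) →
      Passable G

end Ord

end Game

theorem Game.le_refl' {A : Type} [PartialOrder A] : ∀ G : Game A, Game.Le G G := by
  intro G
  induction G with
  | atom a =>
    exact Game.Le.mk (fun x hx => hx.elim) (fun y hy => hy.elim)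
      (fun _ => Game.Tri.ofAtom le_rfl)
  | comp ι κ L R hι hκ ihL ihR =>
    refine Game.Le.mk ?_ ?_ ?_
    · rintro x ⟨i, rfl⟩
      exact Game.Tri.ofLeft ⟨i, rfl⟩ (ihL i)
    · rintro y ⟨j, rfl⟩
      exact Game.Tri.ofRight ⟨j, rfl⟩ (ihR j)
    · rintro (h | h) <;> exact h.elim

/-- Gift horse lemma: if `G = ⟨L|R⟩` is composite and `H` is any game, then
`H ◁ G` iff `G` is equivalent to the game obtained from `G` by adding `H` as
an additional left option. -/
theorem Game.gift_horse {A : Type} [PartialOrder A]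
    (ι κ : Type) (L : ι → Game A) (R : κ → Game A)
    (hι : Nonempty ι) (hκ : Nonempty κ) (H : Game A) :
    Game.Tri H (Game.comp ι κ L R hι hκ) ↔
      Game.Equiv (Game.comp ι κ L R hι hκ)
        (Game.comp (Unit ⊕ ι) κ (Sum.elim (fun _ => H) L) R ⟨Sum.inl ()⟩ hκ) := by
  constructor
  · intro hH
    constructor
    · refine Game.Le.mk ?_ ?_ ?_
      · rintro x ⟨i, rfl⟩
        exact Game.Tri.ofLeft ⟨Sum.inr i, rfl⟩ (Game.le_refl' _)
      · rintro y ⟨j, rfl⟩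
        exact Game.Tri.ofRight ⟨j, rfl⟩ (Game.le_refl' _)
      · rintro (h | h) <;> exact h.elim
    · refine Game.Le.mk ?_ ?_ ?_
      · rintro x ⟨i, rfl⟩
        cases i with
        | inl u => exact hH
        | inr i => exact Game.Tri.ofLeft ⟨i, rfl⟩ (Game.le_refl' _)
      · rintro y ⟨j, rfl⟩
        exact Game.Tri.ofRight ⟨j, rfl⟩ (Game.le_refl' _)
      · rintro (h | h) <;> exact h.elim
  · rintro ⟨_, hle⟩
    cases hle with
    | mk hL _ _ => exact hL H ⟨Sum.inl (), rfl⟩
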